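/- The multivariate weight enumerator of distinct-multiplicity partitions with parts at most m, i.e., the sum of x_1^{a_1}...x_m^{a_m} over tuples (a_1,...,a_m) of nonnegative integers with a_i ≠ a_j whenever a_i > 0 and a_j > 0 and i ≠ j, equals the sum over set partitions C = {C_1,...,C_r} of {1,...,m} of the product over blocks of mishkal(C_j), where mishkal({s}) = 1/(1-x_s) and mishkal({s_1,...,s_d}) = (-1)^{d-1}(d-1)! (x_{s_1}...x_{s_d})/(1 - x_{s_1}...x_{s_d}) for d > 1. -/

import Mathlib

open scoped Classical

/-- `C` is a set partition of `{1,…,m}` (encoded as `Fin m`). -/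
def IsSetPartition (m : ℕ) (C : Finset (Finset (Fin m))) : Prop :=
  (∀ B ∈ C, B.Nonempty) ∧
  (∀ B₁ ∈ C, ∀ B₂ ∈ C, B₁ ≠ B₂ → Disjoint B₁ B₂) ∧
  (∀ x : Fin m, ∃ B ∈ C, x ∈ B)

/-- The weight `mishkal` of a block `B`: `1/(1-x_s)` for a singleton `{s}`, and
`(-1)^{d-1}(d-1)! (x_{s₁}⋯x_{s_d})/(1-x_{s₁}⋯x_{s_d})` for a block of size `d > 1`. -/
noncomputable def mishkal {m : ℕ} (B : Finset (Fin m)) : MvPowerSeries (Fin m) ℚ :=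
  if B.card = 1 then (1 - ∏ s ∈ B, MvPowerSeries.X s)⁻¹
  else
    ((-1 : ℚ) ^ (B.card - 1) * (Nat.factorial (B.card - 1) : ℚ)) •
      ((∏ s ∈ B, MvPowerSeries.X s) * (1 - ∏ s ∈ B, MvPowerSeries.X s)⁻¹)

/-!
The coefficient of `x^d` in `∏_{B ∈ C} mishkal B` factors over the blocks, since they involve
disjoint sets of variables: the block `B` contributes `(-1)^(|B|-1) (|B|-1)!` if `d` is constant
on `B` (with a nonzero value when `|B| ≥ 2`) and `0` otherwise. Sum over set partitions by
induction, splitting off the block `B` of a fixed index `a`. If `d a = 0`, only `B = {a}`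
contributes. If `d a = v ≠ 0`, then `B` runs over the subsets of the level set `T = d⁻¹(v)`
containing `a`, and by induction the rest contributes only if at most one point of `T \ B`
remains; with `t = |T|` the sum over `B` is `(-1)^(t-1) (t-1)! + (t-1) (-1)^(t-2) (t-2)!`,
which vanishes for `t ≥ 2`.
-/

open Finset MvPowerSeries

section SetPartitions

variable {α : Type*} [DecidableEq α]

noncomputable def setPartitions (S : Finset α) : Finset (Finset (Finset α)) :=
  S.powerset.powerset.filter fun C =>
    (∀ B ∈ C, B.Nonempty) ∧ (C : Set (Finset α)).PairwiseDisjoint id ∧ C.sup id = S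

theorem mem_setPartitions {S : Finset α} {C : Finset (Finset α)} :
    C ∈ setPartitions S ↔
      (∀ B ∈ C, B.Nonempty) ∧ (C : Set (Finset α)).PairwiseDisjoint id ∧ C.sup id = S := by
  refine mem_filter.trans (and_iff_right_of_imp fun ⟨_, _, hS⟩ => ?_)
  exact mem_powerset.2 fun B hB => mem_powerset.2 (hS ▸ le_sup (f := id) hB)

theorem subset_of_mem_setPartitions {S B : Finset α} {C : Finset (Finset α)}
    (hC : C ∈ setPartitions S) (hB : B ∈ C) : B ⊆ S :=
  (mem_setPartitions.1 hC).2.2 ▸ le_sup (f := id) hB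

theorem setPartitions_empty : setPartitions (∅ : Finset α) = {∅} := by
  ext C
  rw [mem_singleton]
  refine ⟨fun hC => eq_empty_of_forall_notMem fun B hB => ?_, ?_⟩
  · exact ((mem_setPartitions.1 hC).1 B hB).ne_empty
      (subset_empty.1 (subset_of_mem_setPartitions hC hB))
  · rintro rfl
    simp [mem_setPartitions]

theorem exists_filter_mem_eq_singleton_of_mem_setPartitions {S : Finset α}
    {C : Finset (Finset α)} (hC : C ∈ setPartitions S) {a : α} (ha : a ∈ S) :
    ∃ B, C.filter (a ∈ ·) = {B} := by
  obtain ⟨-, hdisj, hS⟩ := mem_setPartitions.1 hC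
  obtain ⟨B, hB, haB⟩ := mem_sup.1 (hS ▸ ha : a ∈ C.sup id)
  refine ⟨B, eq_singleton_iff_unique_mem.2 ⟨mem_filter.2 ⟨hB, haB⟩, fun B' hB' => ?_⟩⟩
  exact hdisj.elim_finset (mem_filter.1 hB').1 hB a (mem_filter.1 hB').2 haB

theorem erase_mem_setPartitions {S B : Finset α} {C : Finset (Finset α)}
    (hC : C ∈ setPartitions S) (hB : B ∈ C) : C.erase B ∈ setPartitions (S \ B) := by
  obtain ⟨hne, hdisj, hS⟩ := mem_setPartitions.1 hC
  have hBrest : Disjoint B ((C.erase B).sup id) :=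
    Finset.disjoint_sup_right.2 fun B' hB' =>
      hdisj hB (mem_of_mem_erase hB') (ne_of_mem_erase hB').symm
  refine mem_setPartitions.2 ⟨fun B' hB' => hne B' (mem_of_mem_erase hB'),
    hdisj.subset (coe_subset.2 (erase_subset B C)), ?_⟩
  rw [← hS]
  conv_rhs => rw [← insert_erase hB]
  rw [sup_insert, id, sup_eq_union, union_sdiff_cancel_left hBrest]

theorem insert_mem_setPartitions {S B : Finset α} {C : Finset (Finset α)}
    (hC : C ∈ setPartitions (S \ B)) (hBS : B ⊆ S) (hB : B.Nonempty) :
    insert B C ∈ setPartitions S := by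
  obtain ⟨hne, hdisj, hS⟩ := mem_setPartitions.1 hC
  refine mem_setPartitions.2 ⟨forall_mem_insert _ _ _ |>.2 ⟨hB, hne⟩, ?_, ?_⟩
  · rw [coe_insert]
    refine hdisj.insert fun B' hB' _ => ?_
    exact disjoint_of_subset_right (subset_of_mem_setPartitions hC hB') disjoint_sdiff
  · rw [sup_insert, hS, id, sup_eq_union, union_sdiff_of_subset hBS]

theorem notMem_of_mem_setPartitions_sdiff {S B : Finset α} {C : Finset (Finset α)}
    (hC : C ∈ setPartitions (S \ B)) (hB : B.Nonempty) : B ∉ C := fun hBC => by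
  obtain ⟨a, ha⟩ := hB
  exact (mem_sdiff.1 (subset_of_mem_setPartitions hC hBC ha)).2 ha

variable {R : Type*} [CommSemiring R]

theorem sum_setPartitions_filter_mem_prod (g : Finset α → R) {S B : Finset α} (hBS : B ⊆ S)
    (hB : B.Nonempty) :
    ∑ C ∈ (setPartitions S).filter (B ∈ ·), ∏ B' ∈ C, g B' =
      g B * ∑ C ∈ setPartitions (S \ B), ∏ B' ∈ C, g B' := by
  rw [mul_sum]
  refine sum_nbij' (·.erase B) (insert B) (fun C hC => ?_) (fun C hC => ?_) (fun C hC => ?_)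
    (fun C hC => ?_) (fun C hC => ?_)
  · exact erase_mem_setPartitions (mem_filter.1 hC).1 (mem_filter.1 hC).2
  · exact mem_filter.2 ⟨insert_mem_setPartitions hC hBS hB, mem_insert_self B C⟩
  · exact insert_erase (mem_filter.1 hC).2
  · exact erase_insert (notMem_of_mem_setPartitions_sdiff hC hB)
  · exact (mul_prod_erase C g (mem_filter.1 hC).2).symm

theorem sum_setPartitions_prod_eq_sum_block_mem (g : Finset α → R) {S : Finset α} {a : α}
    (ha : a ∈ S) :
    ∑ C ∈ setPartitions S, ∏ B ∈ C, g B =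
      ∑ B ∈ S.powerset.filter (a ∈ ·), g B * ∑ C ∈ setPartitions (S \ B), ∏ B' ∈ C, g B' := by
  calc ∑ C ∈ setPartitions S, ∏ B ∈ C, g B
      = ∑ C ∈ setPartitions S, ∑ _B ∈ C.filter (a ∈ ·), ∏ B' ∈ C, g B' := by
        refine sum_congr rfl fun C hC => ?_
        obtain ⟨B, hB⟩ := exists_filter_mem_eq_singleton_of_mem_setPartitions hC ha
        rw [hB, sum_singleton]
    _ = ∑ B ∈ S.powerset.filter (a ∈ ·), ∑ C ∈ (setPartitions S).filter (B ∈ ·),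
          ∏ B' ∈ C, g B' := by
        refine sum_comm' fun C B => ?_
        simp only [mem_filter, mem_powerset]
        constructor
        · rintro ⟨hC, hB, haB⟩
          exact ⟨⟨hC, hB⟩, subset_of_mem_setPartitions hC hB, haB⟩
        · rintro ⟨⟨hC, hB⟩, -, haB⟩
          exact ⟨hC, hB, haB⟩
    _ = _ := sum_congr rfl fun B hB =>
        sum_setPartitions_filter_mem_prod g (mem_powerset.1 (mem_filter.1 hB).1)
          ⟨a, (mem_filter.1 hB).2⟩

end SetPartitions

section PartitionMobius

/-- The value `μ(0̂, 1̂) = (-1)^(n-1) (n-1)!` of the Möbius function of the lattice of set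
partitions of an `n`-element set. -/
def partitionMobius (R : Type*) [CommRing R] (n : ℕ) : R := (-1) ^ (n - 1) * (n - 1).factorial

variable {R : Type*} [CommRing R]

theorem partitionMobius_one : partitionMobius R 1 = 1 := by simp [partitionMobius]

theorem partitionMobius_add_two (n : ℕ) :
    partitionMobius R (n + 2) = -((n + 1) * partitionMobius R (n + 1)) := by
  simp only [partitionMobius, Nat.add_sub_cancel, show n + 2 - 1 = n + 1 by omega,
    Nat.factorial_succ, pow_succ]
  push_cast
  ring

variable {α : Type*} [DecidableEq α]

theorem sum_powerset_filter_mem_eq_sum_powerset_erase {β : Type*} [AddCommMonoid β]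
    (f : Finset α → β) {T : Finset α} {a : α} (ha : a ∈ T) :
    ∑ B ∈ T.powerset.filter (a ∈ ·), f B = ∑ D ∈ (T.erase a).powerset, f (T \ D) := by
  refine sum_nbij' (T \ ·) (T \ ·) (fun B hB => ?_) (fun D hD => ?_) (fun B hB => ?_)
    (fun D hD => ?_) (fun B hB => ?_)
  · obtain ⟨-, haB⟩ := mem_filter.1 hB
    exact mem_powerset.2 fun x hx =>
      mem_erase.2 ⟨by rintro rfl; exact (mem_sdiff.1 hx).2 haB, (mem_sdiff.1 hx).1⟩
  · exact mem_filter.2 ⟨mem_powerset.2 sdiff_subset,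
      mem_sdiff.2 ⟨ha, fun h => (mem_erase.1 (mem_powerset.1 hD h)).1 rfl⟩⟩
  · exact Finset.sdiff_sdiff_eq_self (mem_powerset.1 (mem_filter.1 hB).1)
  · exact Finset.sdiff_sdiff_eq_self ((mem_powerset.1 hD).trans (erase_subset a T))
  · rw [Finset.sdiff_sdiff_eq_self (mem_powerset.1 (mem_filter.1 hB).1)]

theorem sum_powerset_filter_mem_partitionMobius {T : Finset α} {a : α} (ha : a ∈ T) :
    ∑ B ∈ T.powerset.filter (a ∈ ·), (if #(T \ B) ≤ 1 then partitionMobius R #B else 0) =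
      if #T = 1 then 1 else 0 := by
  obtain ⟨n, hn⟩ : ∃ n, #T = n + 1 := ⟨#T - 1, by have := card_pos.2 ⟨a, ha⟩; omega⟩
  rw [sum_powerset_filter_mem_eq_sum_powerset_erase _ ha]
  calc ∑ D ∈ (T.erase a).powerset,
        (if #(T \ (T \ D)) ≤ 1 then partitionMobius R #(T \ D) else 0)
      = ∑ D ∈ (T.erase a).powerset,
          (if #D ≤ 1 then partitionMobius R (n + 1 - #D) else 0) := by
        refine sum_congr rfl fun D hD => ?_
        have hDT := (mem_powerset.1 hD).trans (erase_subset a T)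
        rw [Finset.sdiff_sdiff_eq_self hDT, card_sdiff_of_subset hDT, hn]
    _ = _ := by
      rw [sum_powerset_apply_card (fun j => if j ≤ 1 then partitionMobius R (n + 1 - j) else 0),
        card_erase_of_mem ha, hn, Nat.add_sub_cancel]
      rcases n with _ | n
      · simp [partitionMobius_one]
      · simp [sum_range_succ', partitionMobius_add_two]

end PartitionMobius

section BlockWeight

variable {α : Type*}

def DistinctNonzeroOn (d : α → ℕ) (S : Finset α) : Prop :=
  Set.InjOn d {i | i ∈ S ∧ d i ≠ 0}

theorem DistinctNonzeroOn.mono {d : α → ℕ} {S S' : Finset α} (h : DistinctNonzeroOn d S')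
    (hS : S ⊆ S') : DistinctNonzeroOn d S :=
  fun _ hx _ hy => h ⟨hS hx.1, hx.2⟩ ⟨hS hy.1, hy.2⟩

theorem distinctNonzeroOn_univ_iff [Fintype α] {d : α → ℕ} :
    DistinctNonzeroOn d univ ↔ ∀ i j, i ≠ j → d i ≠ 0 → d j ≠ 0 → d i ≠ d j := by
  simp only [DistinctNonzeroOn, Set.InjOn, mem_univ, true_and, Set.mem_ofPred_eq]
  exact ⟨fun h i j hij hi hj he => hij (h hi hj he),
    fun h i hi j hj he => by_contra fun hij => h i j hij hi hj he⟩

/-- The coefficient of `mishkal B` at the restriction of `d` to `B`. -/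
noncomputable def blockWeight (R : Type*) [CommRing R] (d : α → ℕ) (B : Finset α) : R :=
  if ∃ k, (∀ i ∈ B, d i = k) ∧ (#B = 1 ∨ k ≠ 0) then partitionMobius R #B else 0

variable {R : Type*} [CommRing R]

theorem blockWeight_of_mem_of_ne_zero {d : α → ℕ} {B : Finset α} {a : α} (ha : a ∈ B)
    (hd : d a ≠ 0) :
    blockWeight R d B = if ∀ i ∈ B, d i = d a then partitionMobius R #B else 0 := by
  rw [blockWeight]
  congr 1
  exact propext ⟨fun ⟨k, hk, _⟩ i hi => (hk i hi).trans (hk a ha).symm,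
    fun h => ⟨d a, h, Or.inr hd⟩⟩

variable [DecidableEq α]

theorem blockWeight_of_mem_of_eq_zero {d : α → ℕ} {B : Finset α} {a : α} (ha : a ∈ B)
    (hd : d a = 0) : blockWeight R d B = if B = {a} then 1 else 0 := by
  by_cases hB : B = {a}
  · subst hB
    rw [blockWeight, if_pos ⟨d a, by simp⟩, if_pos rfl, card_singleton, partitionMobius_one]
  · rw [blockWeight, if_neg hB, if_neg]
    rintro ⟨k, hk, hcard⟩
    obtain rfl : k = 0 := hk a ha ▸ hd
    exact hB (eq_singleton_iff_unique_mem.2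
      ⟨ha, fun b hb => card_le_one.1 (by omega) b hb a ha⟩)

theorem distinctNonzeroOn_sdiff_singleton_iff {d : α → ℕ} {S : Finset α} {a : α}
    (hd : d a = 0) : DistinctNonzeroOn d (S \ {a}) ↔ DistinctNonzeroOn d S := by
  suffices {i | i ∈ S \ {a} ∧ d i ≠ 0} = {i | i ∈ S ∧ d i ≠ 0} by
    rw [DistinctNonzeroOn, DistinctNonzeroOn, this]
  ext i
  simp only [Set.mem_ofPred_eq, mem_sdiff, mem_singleton]
  exact ⟨fun ⟨⟨hi, _⟩, h⟩ => ⟨hi, h⟩, fun ⟨hi, h⟩ => ⟨⟨hi, by rintro rfl; exact h hd⟩, h⟩⟩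

theorem distinctNonzeroOn_sdiff_iff {d : α → ℕ} {S T B : Finset α} {v : ℕ} (hv : v ≠ 0)
    (hT : T = S.filter (d · = v)) (hB : B ⊆ T) :
    DistinctNonzeroOn d (S \ B) ↔ DistinctNonzeroOn d (S \ T) ∧ #(T \ B) ≤ 1 := by
  subst hT
  refine ⟨fun h => ⟨h.mono (sdiff_subset_sdiff subset_rfl hB), card_le_one.2 fun x hx y hy => ?_⟩,
    fun ⟨h, hcard⟩ x hx y hy hxy => ?_⟩
  · simp only [mem_sdiff, mem_filter] at hx hy
    exact h ⟨mem_sdiff.2 ⟨hx.1.1, hx.2⟩, hx.1.2 ▸ hv⟩ ⟨mem_sdiff.2 ⟨hy.1.1, hy.2⟩, hy.1.2 ▸ hv⟩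
      (hx.1.2.trans hy.1.2.symm)
  · obtain ⟨hxS, hxB⟩ := mem_sdiff.1 hx.1
    obtain ⟨hyS, hyB⟩ := mem_sdiff.1 hy.1
    by_cases hxv : d x = v
    · exact card_le_one.1 hcard x (mem_sdiff.2 ⟨mem_filter.2 ⟨hxS, hxv⟩, hxB⟩)
        y (mem_sdiff.2 ⟨mem_filter.2 ⟨hyS, hxy ▸ hxv⟩, hyB⟩)
    · exact h ⟨mem_sdiff.2 ⟨hxS, fun hxT => hxv (mem_filter.1 hxT).2⟩, hx.2⟩
        ⟨mem_sdiff.2 ⟨hyS, fun hyT => hxv (hxy ▸ (mem_filter.1 hyT).2)⟩, hy.2⟩ hxy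

theorem sum_blockWeight_mul_of_eq_zero {d : α → ℕ} {S : Finset α} {a : α} (ha : a ∈ S)
    (hd : d a = 0) :
    ∑ B ∈ S.powerset.filter (a ∈ ·),
        blockWeight R d B * (if DistinctNonzeroOn d (S \ B) then 1 else 0) =
      if DistinctNonzeroOn d S then 1 else 0 := by
  have ha' : {a} ∈ S.powerset.filter (a ∈ ·) :=
    mem_filter.2 ⟨mem_powerset.2 (singleton_subset_iff.2 ha), mem_singleton_self a⟩
  rw [sum_eq_single_of_mem {a} ha' fun B hB hBa => by
      rw [blockWeight_of_mem_of_eq_zero (mem_filter.1 hB).2 hd, if_neg hBa, zero_mul],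
    blockWeight_of_mem_of_eq_zero (mem_singleton_self a) hd, if_pos rfl, one_mul,
    distinctNonzeroOn_sdiff_singleton_iff hd]

theorem sum_blockWeight_mul_of_ne_zero {d : α → ℕ} {S : Finset α} {a : α} (ha : a ∈ S)
    (hd : d a ≠ 0) :
    ∑ B ∈ S.powerset.filter (a ∈ ·),
        blockWeight R d B * (if DistinctNonzeroOn d (S \ B) then 1 else 0) =
      if DistinctNonzeroOn d S then 1 else 0 := by
  set T := S.filter (d · = d a) with hT
  have haT : a ∈ T := mem_filter.2 ⟨ha, rfl⟩
  have hfilter : (S.powerset.filter (a ∈ ·)).filter (fun B => ∀ i ∈ B, d i = d a) =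
      T.powerset.filter (a ∈ ·) := by
    ext B
    simp only [hT, mem_filter, mem_powerset, subset_iff]
    exact ⟨fun ⟨⟨hBS, haB⟩, h⟩ => ⟨fun i hi => ⟨hBS hi, h i hi⟩, haB⟩,
      fun ⟨h, haB⟩ => ⟨⟨fun i hi => (h hi).1, haB⟩, fun i hi => (h hi).2⟩⟩
  have hS := distinctNonzeroOn_sdiff_iff hd hT (empty_subset T)
  rw [sdiff_empty, sdiff_empty] at hS
  calc ∑ B ∈ S.powerset.filter (a ∈ ·),
        blockWeight R d B * (if DistinctNonzeroOn d (S \ B) then 1 else 0)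
      = ∑ B ∈ T.powerset.filter (a ∈ ·),
          partitionMobius R #B * (if DistinctNonzeroOn d (S \ B) then 1 else 0) := by
        rw [← hfilter, sum_filter (s := S.powerset.filter (a ∈ ·))]
        refine sum_congr rfl fun B hB => ?_
        rw [blockWeight_of_mem_of_ne_zero (mem_filter.1 hB).2 hd, ite_mul, zero_mul]
    _ = ∑ B ∈ T.powerset.filter (a ∈ ·),
          (if DistinctNonzeroOn d (S \ T) then 1 else 0) *
            (if #(T \ B) ≤ 1 then partitionMobius R #B else 0) := by
        refine sum_congr rfl fun B hB => ?_
        rw [distinctNonzeroOn_sdiff_iff hd hT (mem_powerset.1 (mem_filter.1 hB).1),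
          ite_zero_mul_ite_zero, one_mul, mul_ite, mul_one, mul_zero]
        congr 1
    _ = _ := by
        rw [← mul_sum, sum_powerset_filter_mem_partitionMobius haT, hS, ite_zero_mul_ite_zero,
          one_mul]
        have : 0 < #T := card_pos.2 ⟨a, haT⟩
        congr 1
        exact propext (and_congr_right fun _ => by omega)

theorem sum_setPartitions_prod_blockWeight (d : α → ℕ) (S : Finset α) :
    ∑ C ∈ setPartitions S, ∏ B ∈ C, blockWeight R d B =
      if DistinctNonzeroOn d S then 1 else 0 := by
  induction S using Finset.strongInduction with
  | H S ih =>
  rcases S.eq_empty_or_nonempty with rfl | ⟨a, ha⟩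
  · rw [setPartitions_empty, sum_singleton, prod_empty, if_pos]
    exact fun i hi => absurd hi.1 (notMem_empty i)
  rw [sum_setPartitions_prod_eq_sum_block_mem _ ha]
  calc ∑ B ∈ S.powerset.filter (a ∈ ·),
        blockWeight R d B * ∑ C ∈ setPartitions (S \ B), ∏ B' ∈ C, blockWeight R d B'
      = ∑ B ∈ S.powerset.filter (a ∈ ·),
          blockWeight R d B * (if DistinctNonzeroOn d (S \ B) then 1 else 0) := by
        refine sum_congr rfl fun B hB => ?_
        obtain ⟨hBS, haB⟩ := mem_filter.1 hB
        rw [ih _ (sdiff_ssubset (mem_powerset.1 hBS) ⟨a, haB⟩)]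
    _ = _ := by
        rcases eq_or_ne (d a) 0 with hd | hd
        · exact sum_blockWeight_mul_of_eq_zero ha hd
        · exact sum_blockWeight_mul_of_ne_zero ha hd

end BlockWeight

section GeometricSeries

variable {σ : Type*}

theorem exists_nsmul_ne_zero_iff {d e : σ →₀ ℕ} :
    (∃ n : ℕ, n ≠ 0 ∧ d = n • e) ↔ e ≤ d ∧ ∃ n : ℕ, d - e = n • e := by
  constructor
  · rintro ⟨n, hn, rfl⟩
    obtain ⟨n, rfl⟩ := Nat.exists_eq_succ_of_ne_zero hn
    rw [succ_nsmul]
    exact ⟨le_add_self, n, add_tsub_cancel_right _ _⟩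
  · rintro ⟨hed, n, hn⟩
    exact ⟨n + 1, n.succ_ne_zero, by rw [succ_nsmul, ← hn, tsub_add_cancel_of_le hed]⟩

theorem coeff_inv_one_sub_monomial {k : Type*} [Field k] {e : σ →₀ ℕ} (he : e ≠ 0)
    (d : σ →₀ ℕ) :
    coeff d ((1 - monomial e (1 : k))⁻¹) = if ∃ n : ℕ, d = n • e then 1 else 0 := by
  let ψ : MvPowerSeries σ k := fun d => if ∃ n : ℕ, d = n • e then 1 else 0
  suffices (1 - monomial e (1 : k))⁻¹ = ψ by rw [this]; rfl
  have hconst : constantCoeff (1 - monomial e (1 : k)) ≠ 0 := by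
    rw [map_sub, map_one, ← coeff_zero_eq_constantCoeff_apply, coeff_monomial_ne he.symm,
      sub_zero]
    exact one_ne_zero
  rw [MvPowerSeries.inv_eq_iff_mul_eq_one hconst, mul_comm]
  ext d
  rw [sub_mul, one_mul, map_sub, coeff_monomial_mul, one_mul, coeff_one]
  change (if ∃ n : ℕ, d = n • e then (1 : k) else 0) -
    (if e ≤ d then (if ∃ n : ℕ, d - e = n • e then 1 else 0) else 0) = _
  simp only [← ite_and, ← exists_nsmul_ne_zero_iff]
  by_cases hd : d = 0
  · subst hd
    have : ¬∃ n : ℕ, n ≠ 0 ∧ (0 : σ →₀ ℕ) = n • e := fun ⟨n, hn, h⟩ =>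
      he ((smul_eq_zero.1 h.symm).resolve_left hn)
    rw [if_pos ⟨0, (zero_smul ℕ e).symm⟩, if_neg this, if_pos rfl, sub_zero]
  · have : (∃ n : ℕ, d = n • e) ↔ ∃ n : ℕ, n ≠ 0 ∧ d = n • e :=
      ⟨fun ⟨n, h⟩ => ⟨n, by rintro rfl; exact hd (by simpa using h), h⟩, fun ⟨n, _, h⟩ => ⟨n, h⟩⟩
    rw [if_neg hd, sub_eq_zero]
    simp only [this]

theorem coeff_monomial_mul_inv_one_sub_monomial {k : Type*} [Field k] {e : σ →₀ ℕ}
    (he : e ≠ 0) (d : σ →₀ ℕ) :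
    coeff d (monomial e (1 : k) * (1 - monomial e 1)⁻¹) =
      if ∃ n : ℕ, n ≠ 0 ∧ d = n • e then 1 else 0 := by
  simp only [coeff_monomial_mul, coeff_inv_one_sub_monomial he, one_mul, ← ite_and,
    exists_nsmul_ne_zero_iff]

end GeometricSeries

section Product

variable {σ R : Type*} [DecidableEq σ] [CommSemiring R]

theorem coeff_mul_eq_coeff_filter_mul_coeff_filter {p q : MvPowerSeries σ R} {s : Finset σ}
    (hp : ∀ e, coeff e p ≠ 0 → e.support ⊆ s) (hq : ∀ e, coeff e q ≠ 0 → Disjoint e.support s)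
    (d : σ →₀ ℕ) :
    coeff d (p * q) = coeff (d.filter (· ∈ s)) p * coeff (d.filter (· ∉ s)) q := by
  rw [coeff_mul]
  refine sum_eq_single_of_mem (d.filter (· ∈ s), d.filter (· ∉ s))
    (mem_antidiagonal.2 (d.filter_add_filter_not _)) ?_
  rintro ⟨e, f⟩ hef hne
  by_contra h
  dsimp only at h
  have he := hp e (left_ne_zero_of_mul h)
  have hf := hq f (right_ne_zero_of_mul h)
  have hfe : d.filter (· ∈ s) = e ∧ d.filter (· ∉ s) = f := by
    have hes : ∀ i, e i ≠ 0 → i ∈ s := fun i hi => he (Finsupp.mem_support_iff.2 hi)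
    have hfs : ∀ i, i ∈ s → f i = 0 := fun i hi =>
      Finsupp.notMem_support_iff.1 fun hi' => disjoint_left.1 hf hi' hi
    rw [← (mem_antidiagonal.1 hef : e + f = d), Finsupp.filter_add, Finsupp.filter_add,
      (Finsupp.filter_eq_self_iff _ _).2 hes, (Finsupp.filter_eq_zero_iff _ _).2 hfs,
      (Finsupp.filter_eq_zero_iff _ _).2 fun i hi => by_contra fun h => hi (hes i h),
      (Finsupp.filter_eq_self_iff (· ∉ s) f).2 fun i h hi => h (hfs i hi), add_zero, zero_add]
    exact ⟨rfl, rfl⟩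
  exact hne (Prod.ext hfe.1.symm hfe.2.symm)

theorem support_subset_of_coeff_prod_ne_zero {C : Finset (Finset σ)}
    {f : Finset σ → MvPowerSeries σ R} (hf : ∀ B ∈ C, ∀ e, coeff e (f B) ≠ 0 → e.support ⊆ B)
    {d : σ →₀ ℕ} (hd : coeff d (∏ B ∈ C, f B) ≠ 0) : d.support ⊆ C.sup id := by
  induction C using Finset.induction_on generalizing d with
  | empty =>
    rw [prod_empty, coeff_one] at hd
    simp [not_not.1 fun h => hd (if_neg h)]
  | insert B C hB ih =>
    rw [prod_insert hB, coeff_mul] at hd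
    obtain ⟨⟨e, g⟩, hmem, hne⟩ := exists_ne_zero_of_sum_ne_zero hd
    rw [← (mem_antidiagonal.1 hmem : e + g = d), sup_insert]
    exact Finsupp.support_add.trans (union_subset_union
      (hf B (mem_insert_self B C) e (left_ne_zero_of_mul hne))
      (ih (fun B' hB' => hf B' (mem_insert_of_mem hB')) (right_ne_zero_of_mul hne)))

theorem coeff_prod_eq_prod_coeff_filter {C : Finset (Finset σ)}
    (hC : (C : Set (Finset σ)).PairwiseDisjoint id) {f : Finset σ → MvPowerSeries σ R}
    (hf : ∀ B ∈ C, ∀ e, coeff e (f B) ≠ 0 → e.support ⊆ B) {d : σ →₀ ℕ}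
    (hd : d.support ⊆ C.sup id) :
    coeff d (∏ B ∈ C, f B) = ∏ B ∈ C, coeff (d.filter (· ∈ B)) (f B) := by
  induction C using Finset.induction_on generalizing d with
  | empty =>
    rw [sup_empty, bot_eq_empty, subset_empty, Finsupp.support_eq_empty] at hd
    simp [hd]
  | insert B C hB ih =>
    obtain ⟨hCdisj, hBC⟩ := (coe_insert B C ▸ Set.pairwiseDisjoint_insert_of_notMem hB).1 hC
    have hfC : ∀ B' ∈ C, ∀ e, coeff e (f B') ≠ 0 → e.support ⊆ B' :=
      fun B' hB' => hf B' (mem_insert_of_mem hB')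
    have hrest : ∀ e, coeff e (∏ B' ∈ C, f B') ≠ 0 → Disjoint e.support B := fun e he =>
      disjoint_of_subset_left (support_subset_of_coeff_prod_ne_zero hfC he)
        (Finset.disjoint_sup_left.2 fun B' hB' => (hBC B' hB').symm)
    have hdC : (d.filter (· ∉ B)).support ⊆ C.sup id := fun i hi => by
      rw [Finsupp.support_filter, mem_filter] at hi
      simpa [hi.2] using hd hi.1
    rw [prod_insert hB, prod_insert hB,
      coeff_mul_eq_coeff_filter_mul_coeff_filter (hf B (mem_insert_self B C)) hrest,
      ih hCdisj hfC hdC]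
    have hfilter : ∀ B' ∈ C, (d.filter (· ∉ B)).filter (· ∈ B') = d.filter (· ∈ B') :=
      fun B' hB' => by
        ext i
        by_cases hi : i ∈ B'
        · have hiB : i ∉ B := fun h => disjoint_left.1 (hBC B' hB') h hi
          simp [hi, hiB]
        · simp [hi]
    rw [prod_congr rfl fun B' hB' => by rw [hfilter B' hB']]

end Product

section BlockExponent

variable {σ : Type*}

noncomputable def blockExponent (B : Finset σ) : σ →₀ ℕ := ∑ s ∈ B, Finsupp.single s 1

theorem prod_X_eq_monomial_blockExponent {R : Type*} [CommSemiring R] (B : Finset σ) :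
    ∏ s ∈ B, (X s : MvPowerSeries σ R) = monomial (blockExponent B) 1 := by
  simp_rw [X_def]
  rw [prod_monomial, prod_const_one]
  rfl

variable [DecidableEq σ]

theorem blockExponent_apply (B : Finset σ) (i : σ) :
    blockExponent B i = if i ∈ B then 1 else 0 := by
  simp [blockExponent, Finsupp.finsetSum_apply, Finsupp.single_apply]

theorem blockExponent_ne_zero {B : Finset σ} (hB : B.Nonempty) : blockExponent B ≠ 0 := by
  obtain ⟨a, ha⟩ := hB
  exact fun h => by simpa [blockExponent_apply, ha] using DFunLike.congr_fun h a

theorem support_nsmul_blockExponent_subset (n : ℕ) (B : Finset σ) :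
    (n • blockExponent B).support ⊆ B := by
  intro i hi
  by_contra hiB
  simp [blockExponent_apply, hiB] at hi

theorem filter_mem_eq_nsmul_blockExponent_iff {d : σ →₀ ℕ} {B : Finset σ} {n : ℕ} :
    d.filter (· ∈ B) = n • blockExponent B ↔ ∀ i ∈ B, d i = n := by
  refine ⟨fun h i hi => ?_, fun h => Finsupp.ext fun i => ?_⟩
  · simpa [blockExponent_apply, hi] using DFunLike.congr_fun h i
  · by_cases hi : i ∈ B <;> simp [blockExponent_apply, hi, h]

end BlockExponent

section Mishkal

variable {m : ℕ}

theorem coeff_mishkal {B : Finset (Fin m)} (hB : B.Nonempty) (e : Fin m →₀ ℕ) :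
    coeff e (mishkal B) =
      if ∃ n : ℕ, e = n • blockExponent B ∧ (#B = 1 ∨ n ≠ 0) then partitionMobius ℚ #B else 0 := by
  have hE := blockExponent_ne_zero hB
  rw [mishkal, prod_X_eq_monomial_blockExponent]
  by_cases hcard : #B = 1
  · simp only [hcard, if_true, coeff_inv_one_sub_monomial hE, true_or, and_true,
      partitionMobius_one]
  · simp only [hcard, if_false, false_or, map_smul, coeff_monomial_mul_inv_one_sub_monomial hE,
      smul_eq_mul, mul_ite, mul_one, mul_zero, and_comm]
    rfl

theorem support_subset_of_coeff_mishkal_ne_zero {B : Finset (Fin m)} (hB : B.Nonempty)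
    {e : Fin m →₀ ℕ} (he : coeff e (mishkal B) ≠ 0) : e.support ⊆ B := by
  rw [coeff_mishkal hB] at he
  obtain ⟨n, rfl, -⟩ := (ite_ne_right_iff.1 he).1
  exact support_nsmul_blockExponent_subset n B

theorem coeff_filter_mem_mishkal {B : Finset (Fin m)} (hB : B.Nonempty) (d : Fin m →₀ ℕ) :
    coeff (d.filter (· ∈ B)) (mishkal B) = blockWeight ℚ d B := by
  simp only [coeff_mishkal hB, filter_mem_eq_nsmul_blockExponent_iff, blockWeight]

theorem coeff_prod_mishkal {C : Finset (Finset (Fin m))} (hC : C ∈ setPartitions univ)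
    (d : Fin m →₀ ℕ) : coeff d (∏ B ∈ C, mishkal B) = ∏ B ∈ C, blockWeight ℚ d B := by
  obtain ⟨hne, hdisj, hcover⟩ := mem_setPartitions.1 hC
  rw [coeff_prod_eq_prod_coeff_filter hdisj
    (fun B hB _ he => support_subset_of_coeff_mishkal_ne_zero (hne B hB) he)
    (by rw [hcover]; exact subset_univ _)]
  exact prod_congr rfl fun B hB => coeff_filter_mem_mishkal (hne B hB) d

theorem filter_isSetPartition_eq_setPartitions :
    univ.filter (IsSetPartition m) = setPartitions univ := by
  ext C
  rw [mem_filter, mem_setPartitions, IsSetPartition, eq_univ_iff_forall]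
  simp only [mem_univ, true_and, mem_sup, id]
  rfl

end Mishkal

/-- The multivariate weight enumerator of distinct-multiplicity partitions with parts at most
`m` (tuples `(a_1,…,a_m) ∈ ℕ^m` whose nonzero entries are pairwise distinct) equals the sum
over set partitions `C` of `{1,…,m}` of `∏_{B ∈ C} mishkal(B)`: the two series have the same
coefficient at every monomial. -/
theorem weight_enumerator_distinct_mult (m : ℕ) (d : Fin m →₀ ℕ) :
    (if ∀ i j : Fin m, i ≠ j → d i ≠ 0 → d j ≠ 0 → d i ≠ d j then (1 : ℚ) else 0) =
      MvPowerSeries.coeff d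
        (∑ C ∈ Finset.univ.filter (fun C : Finset (Finset (Fin m)) => IsSetPartition m C),
          ∏ B ∈ C, mishkal B) := by
  rw [filter_isSetPartition_eq_setPartitions, map_sum,
    sum_congr rfl fun C hC => coeff_prod_mishkal hC d, sum_setPartitions_prod_blockWeight]
  exact if_congr distinctNonzeroOn_univ_iff.symm rfl rfl
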